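/- arXiv:1905.01606 — 3 statements merged into one kernel-verified Lean document; each statement's English description precedes it below -/
import Mathlib

section
/- Let (F, τ) be an LGT-space. If every element of F is closed (i.e., τ* = F), then τ is the discrete LG-topology, i.e., τ = F. -/
def IsLGTop {F : Type*} [Order.Frame F] (τ : Set F) : Prop :=
  ⊤ ∈ τ ∧ (∀ s ∈ τ, ∀ t ∈ τ, s ⊓ t ∈ τ) ∧ (∀ S ⊆ τ, sSup S ∈ τ)

/-- pseudocomplement -/
def pc {F : Type*} [Order.Frame F] (a : F) : F := sSup {x | x ⊓ a = ⊥}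

/-! If every element is closed then `pc` is surjective, so `pc ∘ pc` is the identity by
`t*** = t*`. Hence `pc` is injective, and `a* ∈ τ*` forces `a ∈ τ`. -/

section Pseudocomplement

variable {F : Type*} [Order.Frame F]

lemma pc_eq_compl (a : F) : pc a = aᶜ :=
  le_antisymm (sSup_le fun _ hx => le_compl_iff_disjoint_right.mpr (disjoint_iff.mpr hx))
    (le_sSup (disjoint_iff.mp disjoint_compl_left))

lemma pc_pc_pc (a : F) : pc (pc (pc a)) = pc a := by
  simp only [pc_eq_compl, compl_compl_compl]

lemma pc_involutive_of_surjective (h : Function.Surjective (pc : F → F)) :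
    Function.Involutive (pc : F → F) := by
  intro x
  obtain ⟨t, rfl⟩ := h x
  exact pc_pc_pc t

end Pseudocomplement

theorem stmt_6_general {F : Type*} [Order.Frame F] (τ : Set F)
    (h : pc '' τ = Set.univ) : τ = Set.univ := by
  have hsurj : Function.Surjective (pc : F → F) := fun x => by
    obtain ⟨t, -, ht⟩ : x ∈ pc '' τ := h ▸ Set.mem_univ x
    exact ⟨t, ht⟩
  have hinj := (pc_involutive_of_surjective hsurj).injective
  refine Set.eq_univ_of_forall fun a => hinj.mem_set_image.mp ?_
  exact h ▸ Set.mem_univ (pc a)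

theorem stmt_6 {F : Type*} [Order.Frame F] (τ : Set F) (hτ : IsLGTop τ)
    (h : pc '' τ = Set.univ) : τ = Set.univ :=
  stmt_6_general τ h
end

section
/- Let φ : F → F' be a join-preserving map between LGT-spaces (F,τ) and (F',τ'), let s, t ∈ τ with s ∨ t = 1, and suppose both restrictions φ|_{F_s} and φ|_{F_t} are OLG maps. Then φ is an OLG map. -/
namespace IsLGTop

variable {F : Type*} [Order.Frame F] {τ : Set F}

theorem inf_mem (hτ : IsLGTop τ) {u v : F} (hu : u ∈ τ) (hv : v ∈ τ) : u ⊓ v ∈ τ :=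
  hτ.2.1 u hu v hv

theorem sup_mem (hτ : IsLGTop τ) {u v : F} (hu : u ∈ τ) (hv : v ∈ τ) : u ⊔ v ∈ τ := by
  rw [← sSup_pair]
  exact hτ.2.2 _ (Set.pair_subset hu hv)

end IsLGTop

section SSupPreserving

variable {F F' : Type*} [CompleteLattice F] [CompleteLattice F'] {φ : F → F'}

theorem monotone_of_map_sSup (hφ : ∀ S : Set F, φ (sSup S) = sSup (φ '' S)) : Monotone φ := by
  intro x y hxy
  have h := hφ {x, y}
  rw [Set.image_pair, sSup_pair, sSup_pair, sup_eq_right.mpr hxy] at h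
  rw [h]
  exact le_sup_left

theorem map_sSup_le_iff (hφ : ∀ S : Set F, φ (sSup S) = sSup (φ '' S)) {S : Set F} {b : F'} :
    φ (sSup S) ≤ b ↔ ∀ x ∈ S, φ x ≤ b := by
  rw [hφ, sSup_le_iff, Set.forall_mem_image]

end SSupPreserving

theorem sSup_setOf_map_le_eq_sup {F F' : Type*} [Order.Frame F] [CompleteLattice F']
    {φ : F → F'} (hφ : ∀ S : Set F, φ (sSup S) = sSup (φ '' S))
    {s t : F} (hst : s ⊔ t = ⊤) (b : F') :
    sSup {x : F | φ x ≤ b} =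
      sSup {x : F | x ≤ s ∧ φ x ≤ b} ⊔ sSup {x : F | x ≤ t ∧ φ x ≤ b} := by
  have hmono := monotone_of_map_sSup hφ
  refine le_antisymm (sSup_le fun x hx => ?_) (sup_le ?_ ?_)
  · have hsplit : x = x ⊓ s ⊔ x ⊓ t := by rw [← inf_sup_left, hst, inf_top_eq]
    rw [hsplit]
    exact sup_le_sup
      (le_sSup ⟨inf_le_right, (hmono inf_le_left).trans hx⟩)
      (le_sSup ⟨inf_le_right, (hmono inf_le_left).trans hx⟩)
  · exact le_sSup ((map_sSup_le_iff hφ).2 fun x hx => hx.2)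
  · exact le_sSup ((map_sSup_le_iff hφ).2 fun x hx => hx.2)

theorem stmt_14_general {F F' : Type*} [Order.Frame F] [Order.Frame F']
    (τ : Set F) (τ' : Set F') (hτ : IsLGTop τ)
    (φ : F → F') (hφ : ∀ S : Set F, φ (sSup S) = sSup (φ '' S))
    (s t : F) (hs : s ∈ τ) (ht : t ∈ τ) (hst : s ⊔ t = ⊤)
    (hOLGs : ∀ b ∈ τ', sSup {x : F | x ≤ s ∧ φ x ≤ b} ∈ (fun u => u ⊓ s) '' τ)
    (hOLGt : ∀ b ∈ τ', sSup {x : F | x ≤ t ∧ φ x ≤ b} ∈ (fun u => u ⊓ t) '' τ) :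
    ∀ b ∈ τ', sSup {x : F | φ x ≤ b} ∈ τ := by
  intro b hb
  obtain ⟨u, hu, hus : u ⊓ s = _⟩ := hOLGs b hb
  obtain ⟨v, hv, hvt : v ⊓ t = _⟩ := hOLGt b hb
  rw [sSup_setOf_map_le_eq_sup hφ hst, ← hus, ← hvt]
  exact hτ.sup_mem (hτ.inf_mem hu hs) (hτ.inf_mem hv ht)

theorem stmt_14 {F F' : Type*} [Order.Frame F] [Order.Frame F']
    (τ : Set F) (τ' : Set F') (hτ : IsLGTop τ) (hτ' : IsLGTop τ')
    (φ : F → F') (hφ : ∀ S : Set F, φ (sSup S) = sSup (φ '' S))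
    (s t : F) (hs : s ∈ τ) (ht : t ∈ τ) (hst : s ⊔ t = ⊤)
    (hOLGs : ∀ b ∈ τ', sSup {x : F | x ≤ s ∧ φ x ≤ b} ∈ (fun u => u ⊓ s) '' τ)
    (hOLGt : ∀ b ∈ τ', sSup {x : F | x ≤ t ∧ φ x ≤ b} ∈ (fun u => u ⊓ t) '' τ) :
    ∀ b ∈ τ', sSup {x : F | φ x ≤ b} ∈ τ :=
  stmt_14_general τ τ' hτ φ hφ s t hs ht hst hOLGs hOLGt
end

section
/- Let (F',τ') be an LGT-space, F a frame, and φ : F' → F an onto map such that both φ and its right adjoint φ_* preserve arbitrary joins. Then τ_φ = {t ∈ F : φ_*(t) ∈ τ'} is an LG-topology (subframe) on F, and it is the largest LG-topology on F making φ an OLG map. -/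
def rAdj {F₁ F₂ : Type*} [Order.Frame F₁] [Order.Frame F₂] (φ : F₁ → F₂) (b : F₂) : F₁ :=
  sSup {x | φ x ≤ b}

section

variable {F' F : Type*} [Order.Frame F'] [Order.Frame F] {φ : F' → F}

theorem gc_rAdj (hφ : ∀ S : Set F', φ (sSup S) = sSup (φ '' S)) :
    GaloisConnection φ (rAdj φ) := by
  have mono : Monotone φ := OrderHomClass.mono (sSupHom.mk φ hφ)
  have counit (b : F) : φ (rAdj φ b) ≤ b := by
    rw [rAdj, hφ]
    exact sSup_le (by rintro _ ⟨y, hy, rfl⟩; exact hy)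
  exact fun x b => ⟨fun h => le_sSup h, fun h => (mono h).trans (counit b)⟩

theorem IsLGTop.preimage_rAdj {τ' : Set F'} (hτ' : IsLGTop τ')
    (hφ : ∀ S : Set F', φ (sSup S) = sSup (φ '' S))
    (hψ : ∀ S : Set F, rAdj φ (sSup S) = sSup (rAdj φ '' S)) :
    IsLGTop (rAdj φ ⁻¹' τ') := by
  obtain ⟨htop, hinf, hsSup⟩ := hτ'
  have gc := gc_rAdj hφ
  refine ⟨?_, fun s hs t ht => ?_, fun S hS => ?_⟩
  · simpa [Set.mem_preimage, gc.u_top] using htop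
  · simpa [Set.mem_preimage, gc.u_inf] using hinf _ hs _ ht
  · rw [Set.mem_preimage, hψ]
    exact hsSup _ (Set.image_subset_iff.mpr hS)

end

theorem stmt_16_general {F' F : Type*} [Order.Frame F'] [Order.Frame F]
    (τ' : Set F') (hτ' : IsLGTop τ')
    (φ : F' → F)
    (hφ : ∀ S : Set F', φ (sSup S) = sSup (φ '' S))
    (hψ : ∀ S : Set F, rAdj φ (sSup S) = sSup (rAdj φ '' S)) :
    IsLGTop {t : F | rAdj φ t ∈ τ'} ∧
      ∀ σ : Set F, IsLGTop σ → (∀ t ∈ σ, rAdj φ t ∈ τ') →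
        σ ⊆ {t : F | rAdj φ t ∈ τ'} :=
  ⟨hτ'.preimage_rAdj hφ hψ, fun _ _ hσ => hσ⟩

theorem stmt_16 {F' F : Type*} [Order.Frame F'] [Order.Frame F]
    (τ' : Set F') (hτ' : IsLGTop τ')
    (φ : F' → F) (hsurj : Function.Surjective φ)
    (hφ : ∀ S : Set F', φ (sSup S) = sSup (φ '' S))
    (hψ : ∀ S : Set F, rAdj φ (sSup S) = sSup (rAdj φ '' S)) :
    IsLGTop {t : F | rAdj φ t ∈ τ'} ∧
      ∀ σ : Set F, IsLGTop σ → (∀ t ∈ σ, rAdj φ t ∈ τ') →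
        σ ⊆ {t : F | rAdj φ t ∈ τ'} :=
  stmt_16_general τ' hτ' φ hφ hψ
end
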